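/- arXiv:math-ph/0507045 — 6 statements merged into one kernel-verified Lean document; each statement's English description precedes it below -/
import Mathlib

section
/- Let A = (a_{ij}) be an n×n positive semidefinite complex matrix of rank k, and let e : {1,…,k} → {1,…,n} be a strictly increasing (or just injective) choice of k indices such that the k×k submatrix (a_{e(r) e(s)})_{r,s} is invertible, with inverse (a^{rs}). Then A is completely determined by its rows with indices in the range of e; explicitly, for all i, j ∈ {1,…,n}: a_{ij} = Σ_{r,s=1}^{k} a_{i e(r)} · a^{rs} · conj(a_{j e(s)}). -/
open scoped ComplexOrder

/-!
If the `k × k` block `A[e, f]` is invertible, the columns `A[:, f]` have rank `k`; when `A` itself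
has rank `k` they therefore span its column space, so `A = A[:, f] X` for some `X`. Restricting to
the rows `e` gives `X = A[e, f]⁻¹ A[e, :]`. For a Hermitian `A`, with `f = e`, the rows `A[e, :]`
are the conjugates of the columns `A[:, e]`.
-/

namespace Matrix

variable {K : Type*} [Field K] {m n κ : Type*} [Fintype n] [Fintype κ]

theorem exists_eq_mul_of_range_mulVecLin_le {R : Type*} [CommSemiring R] {o : Type*} [Fintype o]
    {A : Matrix m n R} {C : Matrix m o R}
    (h : LinearMap.range A.mulVecLin ≤ LinearMap.range C.mulVecLin) :
    ∃ X : Matrix o n R, A = C * X := by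
  classical
  have hcol (j : n) : ∃ x, C *ᵥ x = A.col j := h ⟨Pi.single j 1, A.mulVec_single_one j⟩
  choose x hx using hcol
  refine ⟨(of x)ᵀ, ?_⟩
  ext i j
  simpa [mul_apply, mulVec, dotProduct] using (congrFun (hx j) i).symm

theorem range_mulVecLin_submatrix_id_eq [DecidableEq κ] (A : Matrix m n K) {e : κ → m}
    {f : κ → n} (hrank : A.rank = Fintype.card κ) (hinv : IsUnit (A.submatrix e f).det) :
    LinearMap.range (A.submatrix id f).mulVecLin = LinearMap.range A.mulVecLin := by
  refine Submodule.eq_of_le_of_finrank_le ?_ ?_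
  · rw [range_mulVecLin, range_mulVecLin]
    exact Submodule.span_mono (Set.range_comp_subset_range f A.col)
  · change A.rank ≤ (A.submatrix id f).rank
    calc A.rank = (A.submatrix e f).rank := by
          rw [hrank, rank_of_isUnit _ ((isUnit_iff_isUnit_det _).mpr hinv)]
      _ ≤ (A.submatrix id f).rank := rank_submatrix_le (A.submatrix id f) e id

theorem eq_submatrix_mul_inv_mul_submatrix [DecidableEq κ] (A : Matrix m n K) {e : κ → m}
    {f : κ → n} (hrank : A.rank = Fintype.card κ) (hinv : IsUnit (A.submatrix e f).det) :
    A = A.submatrix id f * (A.submatrix e f)⁻¹ * A.submatrix e id := by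
  obtain ⟨X, hX⟩ :=
    exists_eq_mul_of_range_mulVecLin_le (range_mulVecLin_submatrix_id_eq A hrank hinv).ge
  have hrows : A.submatrix e id = A.submatrix e f * X := by
    conv_lhs => rw [hX]
    ext r j
    simp [mul_apply]
  rw [hrows, Matrix.mul_assoc, nonsing_inv_mul_cancel_left _ _ hinv, ← hX]

end Matrix

theorem posSemidef_reconstruction_general {n k : ℕ} (A : Matrix (Fin n) (Fin n) ℂ)
    (hA : A.PosSemidef) (hrank : A.rank = k)
    (e : Fin k → Fin n)
    (hinv : IsUnit (A.submatrix e e).det) :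
    ∀ i j, A i j = ∑ r, ∑ s, A i (e r) * (A.submatrix e e)⁻¹ r s * star (A j (e s)) := by
  intro i j
  have hcard : A.rank = Fintype.card (Fin k) := by rw [hrank, Fintype.card_fin]
  conv_lhs => rw [A.eq_submatrix_mul_inv_mul_submatrix hcard hinv]
  simp only [Matrix.mul_apply, Finset.sum_mul, Matrix.submatrix_apply, id, hA.1.apply]
  exact Finset.sum_comm

/-- A positive semidefinite `n×n` matrix `A` of rank `k` with an invertible principal
`k×k` submatrix (rows/columns selected by the injective map `e`) is completely
determined by the selected rows:
`a_{ij} = Σ_{r,s} a_{i e(r)} · (a^{rs}) · conj(a_{j e(s)})`. -/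
theorem posSemidef_reconstruction {n k : ℕ} (A : Matrix (Fin n) (Fin n) ℂ)
    (hA : A.PosSemidef) (hrank : A.rank = k)
    (e : Fin k → Fin n) (he : Function.Injective e)
    (hinv : IsUnit (A.submatrix e e).det) :
    ∀ i j, A i j = ∑ r, ∑ s, A i (e r) * (A.submatrix e e)⁻¹ r s * star (A j (e s)) :=
  posSemidef_reconstruction_general A hA hrank e hinv
end

section
/- Let X = (x_{ij}) be an n×n Hermitian complex matrix and let e : {1,…,k} → {1,…,n} be injective. Suppose the k×k submatrix (x_{e(r) e(s)})_{r,s} is positive definite (in particular invertible, with inverse (x^{rs})), and suppose that X satisfies the reconstruction formula x_{ij} = Σ_{r,s=1}^{k} x_{i e(r)} · x^{rs} · conj(x_{j e(s)}) for all i, j ∈ {1,…,n}. Then X is positive semidefinite of rank exactly k. -/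
open scoped ComplexOrder
open Matrix

/-- If a Hermitian matrix `X` has a positive definite `k×k` submatrix (selected by an
injective `e`) and satisfies the reconstruction formula
`x_{ij} = Σ_{r,s} x_{i e(r)} · (x^{rs}) · conj(x_{j e(s)})`,
then `X` is positive semidefinite of rank exactly `k`. -/
theorem posSemidef_of_reconstruction {n k : ℕ} (X : Matrix (Fin n) (Fin n) ℂ)
    (hX : X.IsHermitian) (e : Fin k → Fin n) (he : Function.Injective e)
    (hpos : (X.submatrix e e).PosDef)
    (hrec : ∀ i j, X i j =
      ∑ r, ∑ s, X i (e r) * (X.submatrix e e)⁻¹ r s * star (X j (e s))) :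
    X.PosSemidef ∧ X.rank = k := by
  set A := X.submatrix e e with hA
  set Y : Matrix (Fin n) (Fin k) ℂ := X.submatrix id e with hY
  have hfact : X = Y * A⁻¹ * Yᴴ := by
    ext i j
    rw [hrec i j]
    simp [Matrix.mul_apply, Matrix.conjTranspose_apply, hY, Matrix.submatrix_apply,
      Finset.sum_mul]
    rw [Finset.sum_comm]
  have hAinv : A⁻¹.PosDef := hpos.inv
  have hpsd : X.PosSemidef := by
    rw [hfact]
    exact hAinv.posSemidef.mul_mul_conjTranspose_same Y
  refine ⟨hpsd, le_antisymm ?_ ?_⟩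
  · calc X.rank = (Y * (A⁻¹ * Yᴴ)).rank := by rw [hfact, Matrix.mul_assoc]
      _ ≤ Y.rank := Matrix.rank_mul_le_left _ _
      _ ≤ Fintype.card (Fin k) := Matrix.rank_le_card_width Y
      _ = k := Fintype.card_fin k
  · have hArank : A.rank = k := by
      rw [Matrix.rank_of_isUnit A hpos.isUnit, Fintype.card_fin]
    set E : Matrix (Fin k) (Fin n) ℂ := Matrix.submatrix (1 : Matrix (Fin n) (Fin n) ℂ) e id
      with hE
    have hAE : A = E * (X * Eᴴ) := by
      ext r s
      simp [hA, hE, Matrix.mul_apply, Matrix.one_apply, Matrix.conjTranspose_apply,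
        Matrix.submatrix_apply, Finset.sum_ite_eq, apply_ite (starRingEnd ℂ)]
    calc k = A.rank := hArank.symm
      _ = (E * (X * Eᴴ)).rank := by rw [← hAE]
      _ ≤ (X * Eᴴ).rank := Matrix.rank_mul_le_right _ _
      _ ≤ X.rank := Matrix.rank_mul_le_left _ _
end

section
/- Let γ : ℝ → (n×n Hermitian complex matrices) be a curve that is differentiable at t₀ and such that γ(t) is positive semidefinite for every t ∈ ℝ. Then for all x, y ∈ ℂⁿ with γ(t₀)x = 0 and γ(t₀)y = 0, one has ⟨γ'(t₀)x, y⟩ = 0. In particular, every smooth curve lying in the cone of positive semidefinite matrices is, at each point, tangent to the stratum of fixed rank it passes through. -/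
open scoped ComplexOrder Matrix InnerProductSpace Topology

/-!
For `v` in the kernel of `γ t₀`, the function `t ↦ v* γ(t) v` is nonnegative and vanishes at
`t₀`, so it has a minimum there and its derivative `v* γ' v` is zero. Thus the sesquilinear form
`(x, y) ↦ ⟨γ' x, y⟩` vanishes on the diagonal of `ker γ(t₀)`, hence, by complex polarization,
on all of `ker γ(t₀) × ker γ(t₀)`.
-/

theorem HasDerivAt.dotProduct_mulVec {𝕜 𝔸 m n : Type*} [Fintype m] [Fintype n]
    [NontriviallyNormedField 𝕜] [NormedCommRing 𝔸] [NormedAlgebra 𝕜 𝔸]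
    {γ : 𝕜 → Matrix m n 𝔸} {γ' : Matrix m n 𝔸} {t₀ : 𝕜}
    (hγ : ∀ i j, HasDerivAt (fun t => γ t i j) (γ' i j) t₀) (u : m → 𝔸) (v : n → 𝔸) :
    HasDerivAt (fun t => u ⬝ᵥ (γ t *ᵥ v)) (u ⬝ᵥ (γ' *ᵥ v)) t₀ := by
  simp only [dotProduct, Matrix.mulVec]
  exact .fun_sum fun i _ => .const_mul _ <| .fun_sum fun j _ => (hγ i j).mul_const _

/-- In the order of `RCLike`, `0 ≤ z` forces `z` to be real, so the imaginary part of `f` is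
locally constant while its real part has a local minimum. -/
theorem HasDerivAt.eq_zero_of_nonneg_of_eq_zero {K : Type*} [RCLike K] {f : ℝ → K} {f' : K}
    {t₀ : ℝ} (hf : HasDerivAt f f' t₀) (hnonneg : ∀ᶠ t in 𝓝 t₀, 0 ≤ f t) (hzero : f t₀ = 0) :
    f' = 0 := by
  have hre : IsLocalMin (fun t => RCLike.re (f t)) t₀ := by
    filter_upwards [hnonneg] with t ht
    simpa [hzero] using (RCLike.nonneg_iff.mp ht).1
  have him : (fun t => RCLike.im (f t)) =ᶠ[𝓝 t₀] fun _ => 0 := by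
    filter_upwards [hnonneg] with t ht
    exact (RCLike.nonneg_iff.mp ht).2
  refine RCLike.ext ?_ ?_
  · simpa using hre.hasDerivAt_eq_zero (RCLike.reCLM.hasFDerivAt.comp_hasDerivAt t₀ hf)
  · simpa using (RCLike.imCLM.hasFDerivAt.comp_hasDerivAt t₀ hf).unique
      ((hasDerivAt_const t₀ 0).congr_of_eventuallyEq him)

theorem Matrix.dotProduct_mulVec_eq_zero_of_eventually_posSemidef {K n : Type*} [RCLike K]
    [Fintype n] {γ : ℝ → Matrix n n K} {γ' : Matrix n n K} {t₀ : ℝ}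
    (hγ : ∀ i j, HasDerivAt (fun t => γ t i j) (γ' i j) t₀)
    (hpos : ∀ᶠ t in 𝓝 t₀, (γ t).PosSemidef) {v : n → K} (hv : γ t₀ *ᵥ v = 0) :
    star v ⬝ᵥ (γ' *ᵥ v) = 0 :=
  (HasDerivAt.dotProduct_mulVec hγ (star v) v).eq_zero_of_nonneg_of_eq_zero
    (hpos.mono fun _ ht => ht.dotProduct_mulVec_nonneg v) (by simp [hv])

theorem Submodule.inner_map_eq_zero_of_inner_map_self_eq_zero {V : Type*}
    [SeminormedAddCommGroup V] [InnerProductSpace ℂ V] (T : V →ₗ[ℂ] V) {K : Submodule ℂ V}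
    (hK : ∀ v ∈ K, ⟪T v, v⟫_ℂ = 0) {x y : V} (hx : x ∈ K) (hy : y ∈ K) : ⟪T x, y⟫_ℂ = 0 := by
  have hIy := K.smul_mem Complex.I hy
  rw [inner_map_polarization', hK _ (K.add_mem hx hy), hK _ (K.sub_mem hx hy),
    hK _ (K.add_mem hx hIy), hK _ (K.sub_mem hx hIy)]
  ring

theorem Matrix.star_mulVec_dotProduct_eq_zero_of_forall_ker {m n : Type*} [Fintype m]
    [Fintype n] {A : Matrix m n ℂ} {B : Matrix n n ℂ}
    (hB : ∀ v, A *ᵥ v = 0 → star v ⬝ᵥ (B *ᵥ v) = 0) {x y : n → ℂ} (hx : A *ᵥ x = 0)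
    (hy : A *ᵥ y = 0) : star (B *ᵥ x) ⬝ᵥ y = 0 := by
  classical
  have hker : ∀ v ∈ LinearMap.ker (toLpLin 2 2 A), ⟪toLpLin 2 2 B v, v⟫_ℂ = 0 := by
    intro v hv
    rw [EuclideanSpace.inner_eq_star_dotProduct, dotProduct_comm, toLpLin_apply,
      star_dotProduct, hB _ (by simpa [toLpLin_apply] using hv), star_zero]
  have := Submodule.inner_map_eq_zero_of_inner_map_self_eq_zero _ hker
    (x := WithLp.toLp 2 x) (y := WithLp.toLp 2 y) (by simpa [toLpLin_apply])
    (by simpa [toLpLin_apply])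
  rwa [toLpLin_apply, EuclideanSpace.inner_toLp_toLp, dotProduct_comm] at this

/-- If `γ` is a curve of matrices lying in the cone of positive semidefinite matrices,
differentiable at `t₀` (entrywise, with derivative matrix `γ'`), then for all
`x, y` in the kernel of `γ(t₀)` one has `⟨γ'(t₀)x, y⟩ = 0`: the curve is tangent at
each point to the stratum of fixed rank it passes through. -/
theorem curve_in_cone_tangent_to_stratum {n : ℕ} (γ : ℝ → Matrix (Fin n) (Fin n) ℂ)
    (γ' : Matrix (Fin n) (Fin n) ℂ) (t₀ : ℝ)
    (hdiff : ∀ i j, HasDerivAt (fun t => γ t i j) (γ' i j) t₀)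
    (hpos : ∀ t, (γ t).PosSemidef) :
    ∀ x y : Fin n → ℂ, γ t₀ *ᵥ x = 0 → γ t₀ *ᵥ y = 0 →
      star (γ' *ᵥ x) ⬝ᵥ y = 0 := fun _ _ =>
  Matrix.star_mulVec_dotProduct_eq_zero_of_forall_ker fun _ =>
    Matrix.dotProduct_mulVec_eq_zero_of_eventually_posSemidef hdiff (.of_forall hpos)
end

section
/- Let ρ be an n×n density matrix of rank k, and let V be an n×n Hermitian matrix with trace(V) = 0 such that ⟨Vx, y⟩ = 0 for all x, y ∈ ℂⁿ with ρx = 0 and ρy = 0. Then there exists ε > 0 and a differentiable curve γ : (−ε, ε) → (n×n Hermitian matrices) with γ(0) = ρ, γ'(0) = V, and such that γ(t) is a density matrix of rank k for every t ∈ (−ε, ε). -/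
/-!
Diagonalise `ρ = U diag(d) Uᴴ` with `d ≥ 0`. The hypothesis on `V` says that `W = Uᴴ V U` has
`W i j = 0` whenever `d i + d j = 0`, so `Y i j = W i j / (d i + d j)` solves the Lyapunov equation
`Y diag(d) + diag(d) Y = W`, and `A = U Y Uᴴ` is a Hermitian solution of `A ρ + ρ A = V`.
The congruence `(1 + t A) ρ (1 + t A)` is positive semidefinite, has the rank of `ρ` as long as
`1 + t A` is invertible, and has velocity `A ρ + ρ A = V` at `t = 0`. Its trace is
`1 + t² tr(A ρ A) ≥ 1`, and dividing by it gives the curve.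
-/

open scoped ComplexOrder Matrix

open Filter Topology

theorem one_add_smul_mul_mul_one_add_smul {R A : Type*} [CommRing R] [Ring A] [Algebra R A]
    (a : R) (x y : A) :
    (1 + a • x) * y * (1 + a • x) = y + a • (x * y + y * x) + a ^ 2 • (x * y * x) := by
  simp only [add_mul, mul_add, one_mul, mul_one, smul_mul_assoc, mul_smul_comm, smul_smul,
    smul_add]
  module

theorem hasDerivAt_quadratic (a b c : ℂ) :
    HasDerivAt (fun t : ℝ => a + (t : ℂ) * b + (t : ℂ) ^ 2 * c) b 0 := by
  have hz : HasDerivAt (fun t : ℝ => (t : ℂ)) 1 0 := (hasDerivAt_id (0 : ℝ)).ofReal_comp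
  exact (((hz.mul_const b).const_add a).add ((hz.pow 2).mul_const c)).congr_deriv (by simp)

namespace Matrix

section

variable {ι : Type*} [Fintype ι]

theorem hasDerivAt_trace_inv_smul_apply {ρ V B : Matrix ι ι ℂ} (htr : ρ.trace = 1)
    (hVtr : V.trace = 0) (i j : ι) :
    HasDerivAt (fun t : ℝ => ((ρ + (t : ℂ) • V + (t : ℂ) ^ 2 • B).trace⁻¹ •
      (ρ + (t : ℂ) • V + (t : ℂ) ^ 2 • B)) i j) (V i j) 0 := by
  have hentry := hasDerivAt_quadratic (ρ i j) (V i j) (B i j)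
  have htrace := hasDerivAt_quadratic ρ.trace V.trace B.trace
  refine ((hentry.div htrace (by simp [htr])).congr_deriv (by simp [htr, hVtr]))
    |>.congr_of_eventuallyEq (Eventually.of_forall fun t => ?_)
  simp [trace_add, trace_smul, div_eq_inv_mul]

theorem PosSemidef.trace_inv_smul {M : Matrix ι ι ℂ} (hM : M.PosSemidef) :
    (M.trace⁻¹ • M).PosSemidef :=
  hM.smul (inv_nonneg_of_nonneg hM.trace_nonneg)

theorem trace_trace_inv_smul {M : Matrix ι ι ℂ} (h : M.trace ≠ 0) :
    (M.trace⁻¹ • M).trace = 1 := by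
  rw [trace_smul, smul_eq_mul, inv_mul_cancel₀ h]

theorem rank_trace_inv_smul {M : Matrix ι ι ℂ} (h : M.trace ≠ 0) :
    (M.trace⁻¹ • M).rank = M.rank :=
  rank_smul_of_mem_nonZeroDivisors M (mem_nonZeroDivisors_of_ne_zero (inv_ne_zero h))

end

variable {ι : Type*} [Fintype ι] [DecidableEq ι]

theorem exists_isHermitian_mul_diagonal_add_diagonal_mul_eq (d : ι → ℝ) {W : Matrix ι ι ℂ}
    (hW : W.IsHermitian) (hWd : ∀ i j, d i + d j = 0 → W i j = 0) :
    ∃ Y : Matrix ι ι ℂ, Y.IsHermitian ∧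
      Y * diagonal (RCLike.ofReal ∘ d) + diagonal (RCLike.ofReal ∘ d) * Y = W := by
  refine ⟨of fun i j => W i j / (d i + d j), ?_, ?_⟩
  · ext i j
    simp [← hW.apply i j, add_comm]
  · ext i j
    by_cases h : d i + d j = 0
    · simp [hWd i j h]
    · have h' : ((d i : ℂ) + d j) ≠ 0 := by exact_mod_cast h
      simp only [add_apply, mul_diagonal, diagonal_mul, of_apply, Function.comp_apply,
        RCLike.ofReal_eq_complex_ofReal]
      field_simp
      ring

theorem PosSemidef.exists_isHermitian_mul_add_mul_eq {ρ V : Matrix ι ι ℂ} (hρ : ρ.PosSemidef)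
    (hV : V.IsHermitian)
    (hker : ∀ x y : ι → ℂ, ρ *ᵥ x = 0 → ρ *ᵥ y = 0 → star (V *ᵥ x) ⬝ᵥ y = 0) :
    ∃ A : Matrix ι ι ℂ, A.IsHermitian ∧ A * ρ + ρ * A = V := by
  set d := hρ.isHermitian.eigenvalues
  set U : Matrix ι ι ℂ := (hρ.isHermitian.eigenvectorUnitary : Matrix ι ι ℂ)
  have hUl : Uᴴ * U = 1 := by
    rw [← star_eq_conjTranspose, ← mem_unitaryGroup_iff']
    exact (hρ.isHermitian.eigenvectorUnitary).2
  have hUr : U * Uᴴ = 1 := by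
    rw [← star_eq_conjTranspose, ← mem_unitaryGroup_iff]
    exact (hρ.isHermitian.eigenvectorUnitary).2
  have hker_col : ∀ i, d i = 0 → ρ *ᵥ Uᵀ i = 0 := fun i hi => by
    rw [hρ.isHermitian.eigenvectorUnitary_transpose_apply, hρ.isHermitian.mulVec_eigenvectorBasis]
    change d i • _ = 0
    rw [hi, zero_smul]
  have hW : ∀ i j, d i + d j = 0 → (Uᴴ * V * U) i j = 0 := by
    intro i j hij
    have hi : d i = 0 := by linarith [hρ.eigenvalues_nonneg i, hρ.eigenvalues_nonneg j]
    have hj : d j = 0 := by linarith [hρ.eigenvalues_nonneg i, hρ.eigenvalues_nonneg j]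
    rw [mul_mul_apply, ← hker _ _ (hker_col i hi) (hker_col j hj), star_mulVec, hV.eq,
      ← dotProduct_mulVec]
    rfl
  obtain ⟨Y, hY, hYW⟩ := exists_isHermitian_mul_diagonal_add_diagonal_mul_eq d
    (isHermitian_conjTranspose_mul_mul U hV) hW
  refine ⟨U * Y * Uᴴ, isHermitian_mul_mul_conjTranspose U hY, ?_⟩
  have hρU : ρ = U * diagonal (RCLike.ofReal ∘ d) * Uᴴ := hρ.isHermitian.spectral_theorem
  calc U * Y * Uᴴ * ρ + ρ * (U * Y * Uᴴ)
      = U * (Y * diagonal (RCLike.ofReal ∘ d) + diagonal (RCLike.ofReal ∘ d) * Y) * Uᴴ := by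
        rw [hρU]
        simp only [Matrix.mul_add, Matrix.add_mul, Matrix.mul_assoc, ← Matrix.mul_assoc Uᴴ U, hUl,
          Matrix.one_mul]
    _ = V := by
        rw [hYW, ← Matrix.mul_assoc, ← Matrix.mul_assoc, hUr, Matrix.one_mul, Matrix.mul_assoc, hUr,
          Matrix.mul_one]

theorem eventually_isUnit_det_one_add_smul (A : Matrix ι ι ℂ) :
    ∀ᶠ t : ℝ in 𝓝 0, IsUnit (1 + (t : ℂ) • A).det := by
  have hcont : Continuous fun t : ℝ => (1 + (t : ℂ) • A).det := by fun_prop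
  have hdet0 : (1 + ((0 : ℝ) : ℂ) • A).det ≠ 0 := by simp
  filter_upwards [hcont.continuousAt.eventually_ne hdet0] with t ht
  exact isUnit_iff_ne_zero.mpr ht

theorem rank_mul_mul_conjTranspose_of_isUnit_det {M B : Matrix ι ι ℂ} (hM : IsUnit M.det) :
    (M * B * Mᴴ).rank = B.rank := by
  rw [rank_mul_eq_left_of_isUnit_det _ _ (by simpa [det_conjTranspose] using hM.star),
    rank_mul_eq_right_of_isUnit_det _ _ hM]

end Matrix

open Matrix

/-- If `ρ` is an `n×n` density matrix of rank `k` and `V` is a trace-zero Hermitian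
matrix vanishing on the kernel of `ρ`, then there is a differentiable curve of rank-`k`
density matrices through `ρ` with velocity `V` at `ρ`. -/
theorem tangent_realized_by_curve {n k : ℕ} (ρ : Matrix (Fin n) (Fin n) ℂ)
    (hρ : ρ.PosSemidef) (htr : ρ.trace = 1) (hrank : ρ.rank = k)
    (V : Matrix (Fin n) (Fin n) ℂ) (hV : V.IsHermitian) (hVtr : V.trace = 0)
    (hker : ∀ x y : Fin n → ℂ, ρ *ᵥ x = 0 → ρ *ᵥ y = 0 → star (V *ᵥ x) ⬝ᵥ y = 0) :
    ∃ ε > (0 : ℝ), ∃ γ : ℝ → Matrix (Fin n) (Fin n) ℂ,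
      γ 0 = ρ ∧ (∀ i j, HasDerivAt (fun t => γ t i j) (V i j) 0) ∧
      ∀ t : ℝ, |t| < ε →
        (γ t).PosSemidef ∧ (γ t).trace = 1 ∧ (γ t).rank = k := by
  obtain ⟨A, hA, hAρ⟩ := hρ.exists_isHermitian_mul_add_mul_eq hV hker
  set θ : ℝ → Matrix (Fin n) (Fin n) ℂ := fun t => ρ + (t : ℂ) • V + (t : ℂ) ^ 2 • (A * ρ * A)
  have hθ : ∀ t : ℝ, θ t = (1 + (t : ℂ) • A) * ρ * (1 + (t : ℂ) • A)ᴴ := fun t => by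
    rw [(isHermitian_one.add (hA.smul (Complex.conj_ofReal t))).eq,
      one_add_smul_mul_mul_one_add_smul, hAρ]
  have htrθ : ∀ t : ℝ, (θ t).trace = 1 + (t : ℂ) ^ 2 * (A * ρ * Aᴴ).trace := fun t => by
    simp [θ, trace_add, trace_smul, htr, hVtr, hA.eq]
  obtain ⟨ε, hε, hunit⟩ := Metric.eventually_nhds_iff.mp (eventually_isUnit_det_one_add_smul A)
  refine ⟨ε, hε, fun t => (θ t).trace⁻¹ • θ t, by simp [θ, htr],
    hasDerivAt_trace_inv_smul_apply htr hVtr, fun t ht => ?_⟩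
  have hpsd : (θ t).PosSemidef := hθ t ▸ hρ.mul_mul_conjTranspose_same _
  have htrace : (θ t).trace ≠ 0 := by
    have ht2 : (0 : ℂ) ≤ (t : ℂ) ^ 2 := by exact_mod_cast sq_nonneg t
    have hAρA := (hρ.mul_mul_conjTranspose_same A).trace_nonneg
    rw [htrθ]
    exact (add_pos_of_pos_of_nonneg one_pos (mul_nonneg ht2 hAρA)).ne'
  refine ⟨hpsd.trace_inv_smul, trace_trace_inv_smul htrace, ?_⟩
  rw [rank_trace_inv_smul htrace, hθ, rank_mul_mul_conjTranspose_of_isUnit_det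
    (hunit (by simpa using ht)), hrank]
end

section
/- Let ξ = (a_{ij}) be an n×n Hermitian complex matrix of rank k = k₊ + k₋, where k₊ and k₋ are the numbers of positive and negative eigenvalues of ξ counted with multiplicity. Let e : {1,…,k} → {1,…,n} be injective and suppose the k×k submatrix (a_{e(r) e(s)})_{r,s} is invertible with inverse (a^{rs}). Then ξ is uniquely determined by its rows with indices in the range of e; explicitly, for all i, j ∈ {1,…,n}: a_{ij} = Σ_{r,s=1}^{k} a_{i e(r)} · a^{rs} · conj(a_{j e(s)}). -/
open Matrix in


/-- A Hermitian matrix `ξ` of rank `k = k₊ + k₋` (`k₊`, `k₋` the numbers of positive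
and negative eigenvalues, with multiplicity) whose `k×k` submatrix selected by an
injective `e` is invertible is uniquely determined by the selected rows:
`a_{ij} = Σ_{r,s} a_{i e(r)} · (a^{rs}) · conj(a_{j e(s)})`. -/
theorem hermitian_reconstruction {n k kp km : ℕ} (ξ : Matrix (Fin n) (Fin n) ℂ)
    (hξ : ξ.IsHermitian)
    (hkp : (Finset.univ.filter fun i => 0 < hξ.eigenvalues i).card = kp)
    (hkm : (Finset.univ.filter fun i => hξ.eigenvalues i < 0).card = km)
    (hk : k = kp + km) (hrank : ξ.rank = k)
    (e : Fin k → Fin n) (he : Function.Injective e)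
    (hinv : IsUnit (ξ.submatrix e e).det) :
    ∀ i j, ξ i j = ∑ r, ∑ s, ξ i (e r) * (ξ.submatrix e e)⁻¹ r s * star (ξ j (e s)) := by
  intro i j
  set A := ξ.submatrix e e with hA
  have hstar : ∀ s, star (ξ j (e s)) = ξ (e s) j := by
    intro s
    conv_rhs => rw [← hξ.eq]
    simp [Matrix.conjTranspose_apply]
  -- the selected columns of ξ
  set c : Fin k → (Fin n → ℂ) := fun s i => ξ i (e s) with hc
  have hmem : ∀ s, c s ∈ LinearMap.range ξ.mulVecLin := by
    intro s
    exact ⟨Pi.single (e s) 1, by ext i; simp [hc]⟩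
  -- they are linearly independent
  have hli : LinearIndependent ℂ c := by
    rw [Fintype.linearIndependent_iff]
    intro g hg
    have hg' : A *ᵥ g = 0 := by
      ext r
      have := congrFun hg (e r)
      simpa [Matrix.mulVec, dotProduct, hc, hA, mul_comm] using this
    have hg0 : g = 0 := by
      have h2 := congrArg (fun v => A⁻¹ *ᵥ v) hg'
      simpa [Matrix.mulVec_mulVec, Matrix.nonsing_inv_mul A hinv] using h2
    intro s; simp [hg0]
  -- restrict to the range submodule, where they span
  set V := LinearMap.range ξ.mulVecLin
  set c' : Fin k → V := fun s => ⟨c s, hmem s⟩ with hc'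
  have hli' : LinearIndependent ℂ c' :=
    LinearIndependent.of_comp V.subtype hli
  have hcard : Fintype.card (Fin k) = Module.finrank ℂ V := by
    rw [Fintype.card_fin, ← hrank]; rfl
  have hspan : Submodule.span ℂ (Set.range c') = ⊤ :=
    hli'.span_eq_top_of_card_eq_finrank' hcard
  -- column j of ξ is in the span
  have hcolmem : (fun i => ξ i j) ∈ V := ⟨Pi.single j 1, by ext i; simp⟩
  have hcol : (⟨fun i => ξ i j, hcolmem⟩ : V) ∈ Submodule.span ℂ (Set.range c') := by
    rw [hspan]; trivial
  obtain ⟨g, hg⟩ := (Submodule.mem_span_range_iff_exists_fun ℂ).1 hcol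
  have hg2 : ∀ m, ∑ s, g s * ξ m (e s) = ξ m j := by
    intro m
    have := congrArg (fun x : V => (x : Fin n → ℂ) m) hg
    simpa [hc', hc] using this
  -- solve for g : A *ᵥ g = w with w r = ξ (e r) j
  have hAg : A *ᵥ g = fun r => ξ (e r) j := by
    ext r
    simpa [Matrix.mulVec, dotProduct, hA, mul_comm] using hg2 (e r)
  have hgeq : g = A⁻¹ *ᵥ fun r => ξ (e r) j := by
    rw [← hAg, Matrix.mulVec_mulVec, Matrix.nonsing_inv_mul A hinv, Matrix.one_mulVec]
  calc ξ i j = ∑ s, g s * ξ i (e s) := (hg2 i).symm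
    _ = ∑ s, (∑ r, A⁻¹ s r * ξ (e r) j) * ξ i (e s) := by
        rw [hgeq]; rfl
    _ = ∑ r, ∑ s, ξ i (e r) * A⁻¹ r s * star (ξ j (e s)) := by
        simp_rw [hstar, Finset.sum_mul]
        exact Finset.sum_congr rfl fun r _ => Finset.sum_congr rfl fun s _ => by ring
end

section
/- Let ξ and B be n×n Hermitian complex matrices. Then the following are equivalent: (1) there exists an n×n complex matrix v with B = v·ξ + ξ·vᴴ; (2) ⟨Bx, y⟩ = 0 for all x, y ∈ ℂⁿ with ξx = 0 and ξy = 0. In other words, the tangent space at ξ to the orbit of ξ under the GL(n,ℂ)-action (T, ξ) ↦ TξTᴴ consists exactly of the Hermitian matrices vanishing on the kernel of ξ. -/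
/-!
Choose a Hermitian pseudo-inverse `p` of `ξ` commuting with `ξ`, so that `P = ξ p` is the
orthogonal projection onto the range of `ξ` and `Q = 1 - P` the one onto its kernel. The
kernel condition says exactly that `Q B Q = 0`, i.e. `B = P B + B P - P B P`, and the right-hand
side is `v ξ + ξ vᴴ` for `v = (B - ½ P B) p`. Conversely `(v ξ + ξ vᴴ) x = ξ vᴴ x` for `x` in the
kernel, which is orthogonal to the kernel since `ξ` is Hermitian.
-/

open scoped Matrix
open Matrix

section StarAlgebra

variable {R : Type*} [Ring R] [StarRing R] [Algebra ℝ R] [StarModule ℝ R]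

theorem IsSelfAdjoint.exists_eq_mul_add_mul_star {ξ p B : R} (hξ : IsSelfAdjoint ξ)
    (hp : IsSelfAdjoint p) (hB : IsSelfAdjoint B) (hcomm : Commute ξ p)
    (h : (1 - ξ * p) * B * (1 - ξ * p) = 0) : ∃ v : R, B = v * ξ + ξ * star v := by
  have hPstar : star (ξ * p) = ξ * p := ((hξ.commute_iff hp).mp hcomm).star_eq
  generalize hP : ξ * p = P at h hPstar
  have hPp : p * ξ = P := hcomm.eq ▸ hP
  refine ⟨(B - (2⁻¹ : ℝ) • (P * B)) * p, ?_⟩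
  calc B = B - (1 - P) * B * (1 - P) := by rw [h, sub_zero]
    _ = (B - (2⁻¹ : ℝ) • (P * B)) * P + P * (B - (2⁻¹ : ℝ) • (B * P)) := by
        simp only [sub_mul, mul_sub, smul_mul_assoc, mul_smul_comm, one_mul, mul_one, mul_assoc]
        module
    _ = _ := by
        rw [star_mul, star_sub, star_smul, star_mul, hB.star_eq, hPstar, hp.star_eq, star_trivial,
          mul_assoc _ p ξ, hPp, ← mul_assoc ξ p, hP]

end StarAlgebra

namespace Matrix

variable {𝕜 n : Type*} [RCLike 𝕜] [Fintype n]

open scoped ComplexOrder in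
theorem eq_zero_of_forall_star_dotProduct_mulVec {M : Matrix n n 𝕜}
    (h : ∀ x y : n → 𝕜, star x ⬝ᵥ (M *ᵥ y) = 0) : M = 0 :=
  ext_iff_mulVec.mpr fun y ↦ by
    rw [zero_mulVec, ← dotProduct_star_self_eq_zero]
    exact h _ y

theorem star_mulVec_dotProduct_eq_zero_of_mulVec_eq_zero {ξ : Matrix n n 𝕜} (hξ : ξ.IsHermitian)
    (w : n → 𝕜) {y : n → 𝕜} (hy : ξ *ᵥ y = 0) : star (ξ *ᵥ w) ⬝ᵥ y = 0 := by
  rw [star_mulVec, hξ.eq, ← dotProduct_mulVec, hy, dotProduct_zero]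

theorem conjTranspose_mul_mul_eq_zero_of_forall_mulVec_eq_zero {ξ B Q : Matrix n n 𝕜}
    (hB : ∀ x y : n → 𝕜, ξ *ᵥ x = 0 → ξ *ᵥ y = 0 → star (B *ᵥ x) ⬝ᵥ y = 0) (hQ : ξ * Q = 0) :
    Qᴴ * Bᴴ * Q = 0 := by
  have hker (x : n → 𝕜) : ξ *ᵥ (Q *ᵥ x) = 0 := by rw [mulVec_mulVec, hQ, zero_mulVec]
  refine eq_zero_of_forall_star_dotProduct_mulVec fun x y ↦ ?_
  rw [← mulVec_mulVec, ← mulVec_mulVec, ← hB (Q *ᵥ x) (Q *ᵥ y) (hker x) (hker y), star_mulVec,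
    ← dotProduct_mulVec, star_mulVec, ← dotProduct_mulVec]

variable [DecidableEq n]

theorem IsHermitian.exists_pseudoinverse {ξ : Matrix n n 𝕜} (hξ : ξ.IsHermitian) :
    ∃ p : Matrix n n 𝕜, p.IsHermitian ∧ Commute ξ p ∧ ξ * p * ξ = ξ := by
  have hcont (f : ℝ → ℝ) : ContinuousOn f (spectrum ℝ ξ) :=
    ξ.finite_real_spectrum.continuousOn f
  have hid : cfc (fun x : ℝ ↦ x) ξ = ξ := cfc_id' ℝ ξ
  refine ⟨cfc (·⁻¹ : ℝ → ℝ) ξ, cfc_predicate _ ξ, ?_, ?_⟩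
  · simpa only [hid] using cfc_commute_cfc (fun x : ℝ ↦ x) (·⁻¹) ξ
  · -- `x * x⁻¹ * x = x` also at `x = 0`, since `0⁻¹ = 0`
    calc ξ * cfc (·⁻¹ : ℝ → ℝ) ξ * ξ = cfc (fun x : ℝ ↦ x * x⁻¹ * x) ξ := by
          rw [cfc_mul _ _ ξ (hcont _) (hcont _), cfc_mul (fun x : ℝ ↦ x) _ ξ (hcont _) (hcont _),
            hid]
      _ = ξ := by simp only [mul_inv_mul_cancel, hid]

end Matrix

/-- For Hermitian matrices `ξ`, `B`: `B` is of the form `v·ξ + ξ·vᴴ` (i.e. `B` is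
tangent at `ξ` to the `GL(n,ℂ)`-orbit of the action `(T,ξ) ↦ TξTᴴ`) if and only if
`⟨Bx, y⟩ = 0` for all `x, y` in the kernel of `ξ`. -/
theorem tangent_to_GL_orbit_iff {n : ℕ} (ξ B : Matrix (Fin n) (Fin n) ℂ)
    (hξ : ξ.IsHermitian) (hB : B.IsHermitian) :
    (∃ v : Matrix (Fin n) (Fin n) ℂ, B = v * ξ + ξ * vᴴ) ↔
      ∀ x y : Fin n → ℂ, ξ *ᵥ x = 0 → ξ *ᵥ y = 0 → star (B *ᵥ x) ⬝ᵥ y = 0 := by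
  constructor
  · rintro ⟨v, rfl⟩ x y hx hy
    rw [add_mulVec, ← mulVec_mulVec, hx, mulVec_zero, zero_add, ← mulVec_mulVec]
    exact star_mulVec_dotProduct_eq_zero_of_mulVec_eq_zero hξ _ hy
  · intro h
    obtain ⟨p, hp, hcomm, hξpξ⟩ := hξ.exists_pseudoinverse
    have hQ : ξ * (1 - ξ * p) = 0 := by
      rw [mul_sub, mul_one, hcomm.eq, ← mul_assoc, hξpξ, sub_self]
    have hQH : (1 - ξ * p).IsHermitian :=
      isHermitian_one.sub ((hξ.isSelfAdjoint.commute_iff hp.isSelfAdjoint).mp hcomm)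
    have hQBQ := conjTranspose_mul_mul_eq_zero_of_forall_mulVec_eq_zero h hQ
    rw [hQH.eq, hB.eq] at hQBQ
    exact hξ.isSelfAdjoint.exists_eq_mul_add_mul_star hp.isSelfAdjoint hB.isSelfAdjoint hcomm
      hQBQ
end
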